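/- The 9×9 matrix T̂ with entries T̂_{(i,j)}^{(k,l)} = δ_{i−j,k−l} + 3δ_{i,j,k,l} − 2δ_{i,k}δ_{j,l} (indices in ℤ₃, where δ_{i,j,k,l} = 1 iff i=j=k=l) is a Schur idempotent with respect to the Schur product of M₃(ℂ) with its normalized trace δ-form, is self-adjoint, satisfies T̂ ⋆ id = 0 (irreflexive), and is strongly regular: T̂² = T̂ + 2T̂^c + 4·id where T̂^c = Ĵ − id − T̂. -/

import Mathlib

open Finset Matrix

/-- The Schur/convolution product of endomorphisms of `(M₃, tr)`, expressed in
the orthonormal basis `u_{ij} = √3·e_{ij}` (indexed by `ZMod 3 × ZMod 3`):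
`(S ⋆ T)_{(c,f),(a,b)} = (1/3)·∑_{k,d} S_{(c,d),(a,k)}·T_{(d,f),(k,b)}`. -/
noncomputable def schurM3
    (S T : Matrix (ZMod 3 × ZMod 3) (ZMod 3 × ZMod 3) ℂ) :
    Matrix (ZMod 3 × ZMod 3) (ZMod 3 × ZMod 3) ℂ :=
  Matrix.of fun p q =>
    (1 / 3 : ℂ) * ∑ k : ZMod 3, ∑ d : ZMod 3,
      S (p.1, d) (q.1, k) * T (d, p.2) (k, q.2)

/-! `T̂` and `Ĵ` have integer entries, so each of the four claims is an identity between
9×9 integer matrices, which is a finite computation; it transfers to `ℂ` because the cast `ℤ → ℂ`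
commutes with matrix products, with the Schur product and with `star`. -/

abbrev M3Index := ZMod 3 × ZMod 3

section
variable {R S : Type*}

def schurSum [Semiring R] (A B : Matrix M3Index M3Index R) : Matrix M3Index M3Index R :=
  Matrix.of fun p q => ∑ k : ZMod 3, ∑ d : ZMod 3, A (p.1, d) (q.1, k) * B (d, p.2) (k, q.2)

theorem schurM3_eq_smul_schurSum (A B : Matrix M3Index M3Index ℂ) :
    schurM3 A B = (1 / 3 : ℂ) • schurSum A B := rfl

theorem schurSum_map [Semiring R] [Semiring S] (f : R →+* S) (A B : Matrix M3Index M3Index R) :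
    schurSum (A.map f) (B.map f) = (schurSum A B).map f := by
  ext p q
  simp [schurSum, map_sum]

variable (R)

def tHat [Ring R] : Matrix M3Index M3Index R :=
  Matrix.of fun p q =>
    (if p.1 - p.2 = q.1 - q.2 then (1 : R) else 0)
      + (if p.1 = p.2 ∧ p.2 = q.1 ∧ q.1 = q.2 then (3 : R) else 0)
      - (if p.1 = q.1 ∧ p.2 = q.2 then (2 : R) else 0)

def jHat [Ring R] : Matrix M3Index M3Index R :=
  Matrix.of fun p q => if p.1 = p.2 ∧ q.1 = q.2 then (3 : R) else 0

theorem tHat_map [Ring R] [Ring S] (f : R →+* S) : (tHat R).map f = tHat S := by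
  ext p q
  simp only [tHat, map_apply, of_apply, map_sub, map_add, apply_ite f, map_one, map_zero, map_ofNat]

theorem jHat_map [Ring R] [Ring S] (f : R →+* S) : (jHat R).map f = jHat S := by
  ext p q
  simp only [jHat, map_apply, of_apply, apply_ite f, map_zero, map_ofNat]

theorem schurSum_tHat_self_int : schurSum (tHat ℤ) (tHat ℤ) = 3 • tHat ℤ := by decide

theorem schurSum_tHat_one_int : schurSum (tHat ℤ) 1 = 0 := by decide

theorem tHat_mul_self_int : tHat ℤ * tHat ℤ = tHat ℤ + 2 • (jHat ℤ - 1 - tHat ℤ) + 4 • 1 := by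
  decide

theorem tHat_isHermitian_int : (tHat ℤ).IsHermitian := by decide

theorem schurSum_tHat_self [Ring R] : schurSum (tHat R) (tHat R) = 3 • tHat R := by
  simpa only [map_nsmul, RingHom.mapMatrix_apply, ← schurSum_map, tHat_map] using
    congrArg (Int.castRingHom R).mapMatrix schurSum_tHat_self_int

theorem schurSum_tHat_one [Ring R] : schurSum (tHat R) 1 = 0 := by
  simpa only [map_zero, RingHom.mapMatrix_apply, ← schurSum_map, tHat_map,
    Matrix.map_one _ (map_zero _) (map_one _)] using
    congrArg (Int.castRingHom R).mapMatrix schurSum_tHat_one_int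

theorem tHat_mul_self [Ring R] : tHat R * tHat R = tHat R + 2 • (jHat R - 1 - tHat R) + 4 • 1 := by
  simpa only [map_mul, map_add, map_sub, map_nsmul, map_one, RingHom.mapMatrix_apply, tHat_map,
    jHat_map] using congrArg (Int.castRingHom R).mapMatrix tHat_mul_self_int

theorem tHat_isHermitian [Ring R] [StarRing R] : (tHat R).IsHermitian := by
  simpa only [tHat_map] using
    tHat_isHermitian_int.map (Int.castRingHom R) fun n => (star_intCast (R := R) n).symm

end

/-- The 9×9 matrix `T̂` with entries
`T̂_{(i,j)}^{(k,l)} = δ_{i−j,k−l} + 3δ_{i,j,k,l} − 2δ_{i,k}δ_{j,l}` (indices in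
`ℤ₃`) is a Schur idempotent for the normalized-trace δ-form on `M₃(ℂ)`, is
self-adjoint, irreflexive (`T̂ ⋆ id = 0`), and strongly regular:
`T̂² = T̂ + 2·T̂ᶜ + 4·id` with `T̂ᶜ = Ĵ − id − T̂`. -/
theorem stmt_17
    (T J : Matrix (ZMod 3 × ZMod 3) (ZMod 3 × ZMod 3) ℂ)
    (hT : T = Matrix.of fun p q =>
      (if p.1 - p.2 = q.1 - q.2 then (1 : ℂ) else 0)
        + (if p.1 = p.2 ∧ p.2 = q.1 ∧ q.1 = q.2 then (3 : ℂ) else 0)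
        - (if p.1 = q.1 ∧ p.2 = q.2 then (2 : ℂ) else 0))
    (hJ : J = Matrix.of fun p q =>
      if p.1 = p.2 ∧ q.1 = q.2 then (3 : ℂ) else 0) :
    schurM3 T T = T
    ∧ T.conjTranspose = T
    ∧ schurM3 T 1 = 0
    ∧ T * T = T + 2 • (J - 1 - T) + 4 • (1 : Matrix (ZMod 3 × ZMod 3) (ZMod 3 × ZMod 3) ℂ) := by
  obtain rfl : T = tHat ℂ := hT
  obtain rfl : J = jHat ℂ := hJ
  refine ⟨?_, (tHat_isHermitian ℂ).eq, ?_, tHat_mul_self ℂ⟩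
  · rw [schurM3_eq_smul_schurSum, schurSum_tHat_self, ← Nat.cast_smul_eq_nsmul ℂ, smul_smul]
    norm_num
  · rw [schurM3_eq_smul_schurSum, schurSum_tHat_one, smul_zero]
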